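/- arXiv:2503.19826 — 5 statements merged into one kernel-verified Lean document; each statement's English description precedes it below -/
import Mathlib

section
/- Let H(s) = C(sE - A)^{-1}B be the transfer function of a SISO linear descriptor system with E, A ∈ ℝ^{n×n}, B ∈ ℝ^{n×1}, C ∈ ℝ^{1×n}, and let σ ∈ ℂ be such that σE - A is invertible. If V ∈ ℝ^{n×r} has (σE - A)^{-1}B in its column span, W ∈ ℝ^{n×r} is such that W^T E V and σ(W^T E V) - W^T A V are invertible, and the reduced system is E_r = W^T E V, A_r = W^T A V, B_r = W^T B, C_r = C V with transfer function H_r(s) = C_r(sE_r - A_r)^{-1}B_r, then H(σ) = H_r(σ). -/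
open Matrix

/-- Map a real matrix to a complex matrix entrywise. -/
def cm {α β : Type} (M : Matrix α β ℝ) : Matrix α β ℂ := M.map Complex.ofReal

namespace Matrix

variable {R : Type*} [CommRing R] {l m n p : Type*} [Fintype n]

theorem smul_mul_mul_sub_mul_mul (σ : R) (Wt : Matrix m n R) (E A : Matrix n n R)
    (V : Matrix n m R) :
    σ • (Wt * E * V) - Wt * A * V = Wt * (σ • E - A) * V := by
  rw [Matrix.mul_sub, Matrix.sub_mul, Matrix.mul_smul, Matrix.smul_mul]

variable [Fintype m] [DecidableEq m] [DecidableEq n]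

/-- The coefficient vector `z` is forced to be `(Wt K V)⁻¹ Wt B`. -/
theorem mul_nonsing_inv_mul_eq_of_mul_eq (K : Matrix n n R) (V : Matrix n m R)
    (Wt : Matrix m n R) (B : Matrix n p R) (C : Matrix l n R) (z : Matrix m p R)
    (hK : IsUnit K) (hKr : IsUnit (Wt * K * V)) (hz : V * z = K⁻¹ * B) :
    C * K⁻¹ * B = C * V * (Wt * K * V)⁻¹ * (Wt * B) := by
  have hKrz : Wt * K * V * z = Wt * B := by
    rw [Matrix.mul_assoc, hz, Matrix.mul_assoc,
      mul_nonsing_inv_cancel_left K B ((isUnit_iff_isUnit_det K).mp hK)]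
  have hz_eq : z = (Wt * K * V)⁻¹ * (Wt * B) := by
    rw [← hKrz, nonsing_inv_mul_cancel_left _ z ((isUnit_iff_isUnit_det _).mp hKr)]
  rw [Matrix.mul_assoc C, ← hz, hz_eq]
  simp only [Matrix.mul_assoc]

end Matrix

theorem stmt0_general {n r : ℕ}
    (E A : Matrix (Fin n) (Fin n) ℝ) (B : Matrix (Fin n) (Fin 1) ℝ)
    (C : Matrix (Fin 1) (Fin n) ℝ) (σ : ℂ)
    (V W : Matrix (Fin n) (Fin r) ℝ)
    (hσ : IsUnit (σ • cm E - cm A))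
    (hspan : ∃ z : Matrix (Fin r) (Fin 1) ℂ,
      (cm V) * z = (σ • cm E - cm A)⁻¹ * cm B)
    (hred : IsUnit (σ • ((cm W)ᵀ * cm E * cm V) - (cm W)ᵀ * cm A * cm V)) :
    (cm C) * (σ • cm E - cm A)⁻¹ * cm B
      = (cm C * cm V) *
        (σ • ((cm W)ᵀ * cm E * cm V) - (cm W)ᵀ * cm A * cm V)⁻¹ *
        ((cm W)ᵀ * cm B) := by
  obtain ⟨z, hz⟩ := hspan
  rw [smul_mul_mul_sub_mul_mul] at hred ⊢
  exact mul_nonsing_inv_mul_eq_of_mul_eq _ _ _ _ _ z hσ hred hz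

/-- One-sided rational interpolation: if `(σE - A)⁻¹B` lies in the column span of `V`,
then the Petrov–Galerkin reduced transfer function matches `H` at `σ`. -/
theorem stmt0 {n r : ℕ}
    (E A : Matrix (Fin n) (Fin n) ℝ) (B : Matrix (Fin n) (Fin 1) ℝ)
    (C : Matrix (Fin 1) (Fin n) ℝ) (σ : ℂ)
    (V W : Matrix (Fin n) (Fin r) ℝ)
    (hσ : IsUnit (σ • cm E - cm A))
    (hspan : ∃ z : Matrix (Fin r) (Fin 1) ℂ,
      (cm V) * z = (σ • cm E - cm A)⁻¹ * cm B)
    (hEr : IsUnit ((cm W)ᵀ * cm E * cm V))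
    (hred : IsUnit (σ • ((cm W)ᵀ * cm E * cm V) - (cm W)ᵀ * cm A * cm V)) :
    (cm C) * (σ • cm E - cm A)⁻¹ * cm B
      = (cm C * cm V) *
        (σ • ((cm W)ᵀ * cm E * cm V) - (cm W)ᵀ * cm A * cm V)⁻¹ *
        ((cm W)ᵀ * cm B) :=
  stmt0_general E A B C σ V W hσ hspan hred
end

section
/- Let H(s) = C(sE - A)^{-1}B with E, A ∈ ℝ^{n×n}, B ∈ ℝ^{n×1}, C ∈ ℝ^{1×n}, and σ ∈ ℂ with σE - A invertible. If both (σE - A)^{-1}B is in the column span of V and (σE - A)^{-T}C^T is in the column span of W, and σ(W^T E V) - W^T A V is invertible, then the reduced transfer function H_r(s) = CV(s W^T E V - W^T A V)^{-1} W^T B satisfies not only H(σ) = H_r(σ) but also H'(σ) = H_r'(σ) (Hermite interpolation of the derivative). -/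
open Matrix

/-!
With `K = σE - A` and the reduced pencil `Kᵣ = Wᵀ K V`, the right condition `K⁻¹B = V z` gives
`Kᵣ⁻¹ WᵀB = z`, and the left condition `C K⁻¹ = y Wᵀ` gives `C V Kᵣ⁻¹ = y`. Hence
`C K⁻¹ B = C V z = C V Kᵣ⁻¹ WᵀB`, and the derivative term
`(C K⁻¹) E (K⁻¹B) = y (WᵀEV) z` is the same sandwich for the reduced system.
-/

namespace Matrix

theorem mul_smul_sub_mul {R m n p : Type*} [CommRing R] [Fintype n]
    (L : Matrix m n R) (V : Matrix n p R) (σ : R) (E A : Matrix n n R) :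
    L * (σ • E - A) * V = σ • (L * E * V) - L * A * V := by
  rw [Matrix.mul_sub, Matrix.sub_mul, Matrix.mul_smul, Matrix.smul_mul]

variable {R : Type*} [CommRing R] {k m n : Type*}
  [Fintype m] [DecidableEq m] [Fintype n] [DecidableEq n]

theorem projected_inv_mul_of_mul_eq_inv_mul {K : Matrix n n R} {L : Matrix m n R}
    {V : Matrix n m R} {b : Matrix n k R} {z : Matrix m k R}
    (hK : IsUnit K) (hKr : IsUnit (L * K * V)) (hz : V * z = K⁻¹ * b) :
    (L * K * V)⁻¹ * (L * b) = z := by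
  have hb : L * K * V * z = L * b := by
    rw [Matrix.mul_assoc, Matrix.mul_assoc, hz,
      mul_nonsing_inv_cancel_left _ _ ((isUnit_iff_isUnit_det K).mp hK)]
  rw [← hb, nonsing_inv_mul_cancel_left _ _ ((isUnit_iff_isUnit_det _).mp hKr)]

theorem mul_projected_inv_of_mul_eq_mul_inv {K : Matrix n n R} {L : Matrix m n R}
    {V : Matrix n m R} {c : Matrix k n R} {y : Matrix k m R}
    (hK : IsUnit K) (hKr : IsUnit (L * K * V)) (hy : y * L = c * K⁻¹) :
    c * V * (L * K * V)⁻¹ = y := by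
  have hc : y * (L * K * V) = c * V := by
    rw [← Matrix.mul_assoc, ← Matrix.mul_assoc, hy,
      nonsing_inv_mul_cancel_right _ _ ((isUnit_iff_isUnit_det K).mp hK)]
  rw [← hc, mul_nonsing_inv_cancel_right _ _ ((isUnit_iff_isUnit_det _).mp hKr)]

variable {K : Matrix n n R} {L : Matrix m n R} {V : Matrix n m R}
  {b : Matrix n k R} {c : Matrix k n R}

theorem mul_inv_mul_eq_projected (hK : IsUnit K) (hKr : IsUnit (L * K * V))
    (hb : ∃ z : Matrix m k R, V * z = K⁻¹ * b) :
    c * K⁻¹ * b = c * V * (L * K * V)⁻¹ * (L * b) := by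
  obtain ⟨z, hz⟩ := hb
  rw [Matrix.mul_assoc c, ← hz, Matrix.mul_assoc (c * V),
    projected_inv_mul_of_mul_eq_inv_mul hK hKr hz, Matrix.mul_assoc]

theorem mul_inv_mul_inv_mul_eq_projected (E : Matrix n n R)
    (hK : IsUnit K) (hKr : IsUnit (L * K * V))
    (hb : ∃ z : Matrix m k R, V * z = K⁻¹ * b) (hc : ∃ y : Matrix k m R, y * L = c * K⁻¹) :
    c * K⁻¹ * E * K⁻¹ * b
      = c * V * (L * K * V)⁻¹ * (L * E * V) * (L * K * V)⁻¹ * (L * b) := by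
  obtain ⟨z, hz⟩ := hb
  obtain ⟨y, hy⟩ := hc
  calc c * K⁻¹ * E * K⁻¹ * b = y * L * E * (V * z) := by
        rw [hy, hz, Matrix.mul_assoc _ K⁻¹ b]
    _ = (c * V * (L * K * V)⁻¹) * (L * E * V) * ((L * K * V)⁻¹ * (L * b)) := by
        rw [mul_projected_inv_of_mul_eq_mul_inv hK hKr hy,
          projected_inv_mul_of_mul_eq_inv_mul hK hKr hz]
        simp only [Matrix.mul_assoc]
    _ = _ := by simp only [Matrix.mul_assoc]

end Matrix

/-- Two-sided (Hermite) rational interpolation: if `(σE - A)⁻¹B ∈ span V` and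
`(σE - A)⁻ᵀCᵀ ∈ span W`, then the reduced transfer function matches `H` and its
derivative `H'(s) = -C(sE-A)⁻¹E(sE-A)⁻¹B` at `σ`. -/
theorem stmt1 {n r : ℕ}
    (E A : Matrix (Fin n) (Fin n) ℝ) (B : Matrix (Fin n) (Fin 1) ℝ)
    (C : Matrix (Fin 1) (Fin n) ℝ) (σ : ℂ)
    (V W : Matrix (Fin n) (Fin r) ℝ)
    (hσ : IsUnit (σ • cm E - cm A))
    (hspanV : ∃ z : Matrix (Fin r) (Fin 1) ℂ,
      (cm V) * z = (σ • cm E - cm A)⁻¹ * cm B)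
    (hspanW : ∃ z : Matrix (Fin r) (Fin 1) ℂ,
      (cm W) * z = ((σ • cm E - cm A)⁻¹)ᵀ * (cm C)ᵀ)
    (hred : IsUnit (σ • ((cm W)ᵀ * cm E * cm V) - (cm W)ᵀ * cm A * cm V)) :
    (cm C) * (σ • cm E - cm A)⁻¹ * cm B
      = (cm C * cm V) *
        (σ • ((cm W)ᵀ * cm E * cm V) - (cm W)ᵀ * cm A * cm V)⁻¹ *
        ((cm W)ᵀ * cm B)
    ∧
    -((cm C) * (σ • cm E - cm A)⁻¹ * cm E * (σ • cm E - cm A)⁻¹ * cm B)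
      = -((cm C * cm V) *
          (σ • ((cm W)ᵀ * cm E * cm V) - (cm W)ᵀ * cm A * cm V)⁻¹ *
          ((cm W)ᵀ * cm E * cm V) *
          (σ • ((cm W)ᵀ * cm E * cm V) - (cm W)ᵀ * cm A * cm V)⁻¹ *
          ((cm W)ᵀ * cm B)) := by
  rw [← mul_smul_sub_mul] at hred ⊢
  have hleft : ∃ y : Matrix (Fin 1) (Fin r) ℂ, y * (cm W)ᵀ = cm C * (σ • cm E - cm A)⁻¹ := by
    obtain ⟨z, hz⟩ := hspanW
    exact ⟨zᵀ, by simpa [transpose_mul] using congrArg transpose hz⟩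
  exact ⟨mul_inv_mul_eq_projected hσ hred hspanV,
    congrArg Neg.neg (mul_inv_mul_inv_mul_eq_projected _ hσ hred hspanV hleft)⟩
end

section
/- Let H(s) = C(sE - A)^{-1}B be a MIMO transfer function with B ∈ ℝ^{n×m}, C ∈ ℝ^{p×n}, and let σ ∈ ℂ with σE - A invertible, and let b ∈ ℝ^m be a tangent direction. If (σE - A)^{-1}Bb lies in the column span of V ∈ ℝ^{n×r}, and σ W^T E V - W^T A V is invertible, then the reduced transfer function H_r(s) = CV(sW^T E V - W^T A V)^{-1}W^T B satisfies the right tangential interpolation condition H(σ)b = H_r(σ)b. -/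
open Matrix

/-- Map a real vector to a complex vector entrywise. -/
def cv {α : Type} (v : α → ℝ) : α → ℂ := fun i => (v i : ℂ)

/-!
The reduced pencil is the compression `Wᵀ (σE - A) V` of the full one. If `x = (σE - A)⁻¹ B b`
equals `V z`, then `Wᵀ (σE - A) V z = Wᵀ B b`, so `z` is exactly the reduced solution
`(Wᵀ (σE - A) V)⁻¹ Wᵀ B b`; hence both transfer functions applied to `b` equal `C V z`.
-/

namespace Matrix

theorem smul_sub_compress {R n r : Type*} [CommRing R] [Fintype n] (σ : R)
    (Wt : Matrix r n R) (E A : Matrix n n R) (V : Matrix n r R) :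
    σ • (Wt * E * V) - Wt * A * V = Wt * (σ • E - A) * V := by
  rw [Matrix.mul_sub, Matrix.sub_mul, Matrix.mul_smul, Matrix.smul_mul]

variable {R : Type*} [CommRing R] {n r p : Type*} [Fintype n] [DecidableEq n] [Fintype r]
  [DecidableEq r]

theorem inv_mulVec_eq_of_compress {K : Matrix n n R} {Wt : Matrix r n R} {V : Matrix n r R}
    {u : n → R} {z : r → R} (hK : IsUnit K) (hKr : IsUnit (Wt * K * V))
    (hz : V *ᵥ z = K⁻¹ *ᵥ u) :
    (Wt * K * V)⁻¹ *ᵥ (Wt *ᵥ u) = z := by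
  have hKV : K *ᵥ (V *ᵥ z) = u := by
    rw [hz, mulVec_mulVec, mul_nonsing_inv _ ((isUnit_iff_isUnit_det _).mp hK), one_mulVec]
  have hKrz : (Wt * K * V) *ᵥ z = Wt *ᵥ u := by
    rw [← mulVec_mulVec, ← mulVec_mulVec, hKV]
  rw [← hKrz, mulVec_mulVec, nonsing_inv_mul _ ((isUnit_iff_isUnit_det _).mp hKr), one_mulVec]

theorem mul_inv_mulVec_eq_compress {K : Matrix n n R} {Wt : Matrix r n R} {V : Matrix n r R}
    (C : Matrix p n R) {u : n → R} (hK : IsUnit K) (hKr : IsUnit (Wt * K * V))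
    (hspan : ∃ z, V *ᵥ z = K⁻¹ *ᵥ u) :
    (C * K⁻¹) *ᵥ u = (C * V * (Wt * K * V)⁻¹ * Wt) *ᵥ u := by
  obtain ⟨z, hz⟩ := hspan
  calc (C * K⁻¹) *ᵥ u = C *ᵥ (V *ᵥ z) := by rw [hz, mulVec_mulVec]
    _ = (C * V) *ᵥ ((Wt * K * V)⁻¹ *ᵥ (Wt *ᵥ u)) := by
        rw [inv_mulVec_eq_of_compress hK hKr hz, mulVec_mulVec]
    _ = (C * V * (Wt * K * V)⁻¹ * Wt) *ᵥ u := by simp only [mulVec_mulVec, Matrix.mul_assoc]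

end Matrix

/-- Right tangential interpolation: if `(σE - A)⁻¹Bb ∈ span V`, then
`H(σ)b = H_r(σ)b` for the Petrov–Galerkin reduced model. -/
theorem stmt2 {n m p r : ℕ}
    (E A : Matrix (Fin n) (Fin n) ℝ) (B : Matrix (Fin n) (Fin m) ℝ)
    (C : Matrix (Fin p) (Fin n) ℝ) (σ : ℂ) (b : Fin m → ℝ)
    (V W : Matrix (Fin n) (Fin r) ℝ)
    (hσ : IsUnit (σ • cm E - cm A))
    (hspan : ∃ z : Fin r → ℂ,
      (cm V) *ᵥ z = (σ • cm E - cm A)⁻¹ *ᵥ (cm B *ᵥ cv b))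
    (hred : IsUnit (σ • ((cm W)ᵀ * cm E * cm V) - (cm W)ᵀ * cm A * cm V)) :
    (cm C * (σ • cm E - cm A)⁻¹ * cm B) *ᵥ cv b
      = ((cm C * cm V) *
          (σ • ((cm W)ᵀ * cm E * cm V) - (cm W)ᵀ * cm A * cm V)⁻¹ *
          ((cm W)ᵀ * cm B)) *ᵥ cv b := by
  rw [smul_sub_compress] at hred ⊢
  have key := mul_inv_mulVec_eq_compress (cm C) hσ hred hspan
  simpa only [← mulVec_mulVec, Matrix.mul_assoc] using key
end

section
/- Let H(s) = C(sE - A)^{-1}B be a MIMO transfer function, σ ∈ ℂ with σE - A invertible, and c ∈ ℝ^p a left tangent direction. If (σE - A)^{-T}C^T c lies in the column span of W ∈ ℝ^{n×r}, and σ W^T E V - W^T A V is invertible, then c^T H(σ) = c^T H_r(σ), where H_r(s) = CV(sW^T E V - W^T A V)^{-1}W^T B. -/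
/-!
The span condition says that `Kᵀ (W z) = Cᵀ c` for `K = σE - A`, i.e. `cᵀ C = zᵀ Wᵀ K`.
Hence `cᵀ C K⁻¹ B = zᵀ Wᵀ B`, and, since the reduced pencil is `Kᵣ = Wᵀ K V`,
also `cᵀ C V Kᵣ⁻¹ Wᵀ B = zᵀ Kᵣ Kᵣ⁻¹ Wᵀ B = zᵀ Wᵀ B`.
-/

open Matrix

namespace Matrix

variable {R : Type*} [CommRing R] {ι κ μ π : Type*}
  [Fintype ι] [DecidableEq ι] [Fintype κ] [Fintype π]

theorem vecMul_eq_vecMul_transpose_mul_of_mulVec_eq {K : Matrix ι ι R} (hK : IsUnit K.det)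
    {W : Matrix ι κ R} {C : Matrix π ι R} {c : π → R} {z : κ → R}
    (hz : W *ᵥ z = K⁻¹ᵀ *ᵥ (Cᵀ *ᵥ c)) :
    c ᵥ* C = z ᵥ* (Wᵀ * K) := by
  calc c ᵥ* C = Cᵀ *ᵥ c := (mulVec_transpose C c).symm
    _ = Kᵀ *ᵥ (W *ᵥ z) := by
      rw [hz, mulVec_mulVec, transpose_nonsing_inv,
        mul_nonsing_inv _ (by simpa using hK), one_mulVec]
    _ = z ᵥ* (Wᵀ * K) := by
      rw [mulVec_mulVec, ← mulVec_transpose, transpose_mul, transpose_transpose]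

theorem vecMul_mul_nonsing_inv_mul_eq_of_left_tangent [DecidableEq κ] {K : Matrix ι ι R}
    (hK : IsUnit K.det) {V W : Matrix ι κ R} (hKr : IsUnit (Wᵀ * K * V).det)
    (B : Matrix ι μ R)
    {C : Matrix π ι R} {c : π → R} {z : κ → R} (hz : W *ᵥ z = K⁻¹ᵀ *ᵥ (Cᵀ *ᵥ c)) :
    c ᵥ* (C * K⁻¹ * B) = c ᵥ* (C * V * (Wᵀ * K * V)⁻¹ * (Wᵀ * B)) := by
  have hcC := vecMul_eq_vecMul_transpose_mul_of_mulVec_eq hK hz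
  calc c ᵥ* (C * K⁻¹ * B) = z ᵥ* (Wᵀ * K * K⁻¹ * B) := by
        rw [Matrix.mul_assoc C, ← vecMul_vecMul, hcC, vecMul_vecMul, Matrix.mul_assoc _ K⁻¹]
    _ = z ᵥ* (Wᵀ * K * V * (Wᵀ * K * V)⁻¹ * (Wᵀ * B)) := by
      rw [Matrix.mul_assoc _ K, mul_nonsing_inv _ hK, mul_nonsing_inv _ hKr,
        Matrix.mul_one, Matrix.one_mul]
    _ = c ᵥ* (C * V * (Wᵀ * K * V)⁻¹ * (Wᵀ * B)) := by
      simp only [Matrix.mul_assoc]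
      rw [← vecMul_vecMul c C, hcC, vecMul_vecMul, Matrix.mul_assoc]

end Matrix

/-- Left tangential interpolation: if `(σE - A)⁻ᵀCᵀc ∈ span W`, then
`cᵀH(σ) = cᵀH_r(σ)` for the Petrov–Galerkin reduced model. -/
theorem stmt3 {n m p r : ℕ}
    (E A : Matrix (Fin n) (Fin n) ℝ) (B : Matrix (Fin n) (Fin m) ℝ)
    (C : Matrix (Fin p) (Fin n) ℝ) (σ : ℂ) (c : Fin p → ℝ)
    (V W : Matrix (Fin n) (Fin r) ℝ)
    (hσ : IsUnit (σ • cm E - cm A))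
    (hspan : ∃ z : Fin r → ℂ,
      (cm W) *ᵥ z = ((σ • cm E - cm A)⁻¹)ᵀ *ᵥ ((cm C)ᵀ *ᵥ cv c))
    (hred : IsUnit (σ • ((cm W)ᵀ * cm E * cm V) - (cm W)ᵀ * cm A * cm V)) :
    cv c ᵥ* (cm C * (σ • cm E - cm A)⁻¹ * cm B)
      = cv c ᵥ* ((cm C * cm V) *
          (σ • ((cm W)ᵀ * cm E * cm V) - (cm W)ᵀ * cm A * cm V)⁻¹ *
          ((cm W)ᵀ * cm B)) := by
  obtain ⟨z, hz⟩ := hspan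
  have hpencil : σ • ((cm W)ᵀ * cm E * cm V) - (cm W)ᵀ * cm A * cm V
      = (cm W)ᵀ * (σ • cm E - cm A) * cm V := by
    rw [Matrix.mul_sub, Matrix.sub_mul, Matrix.mul_smul, Matrix.smul_mul]
  rw [hpencil] at hred ⊢
  exact vecMul_mul_nonsing_inv_mul_eq_of_left_tangent ((isUnit_iff_isUnit_det _).mp hσ)
    ((isUnit_iff_isUnit_det _).mp hred) (cm B) hz
end

section
/- If the tangential IRKA iteration converges, i.e., the interpolation points {σ_1,…,σ_r} equal the mirrored eigenvalues {-λ_1(A_r E_r^{-1}),…,-λ_r(A_r E_r^{-1})} of the reduced pencil, then the reduced transfer function H_r interpolates H at the reflected reduced poles: H(-λ_i)b_i = H_r(-λ_i)b_i, c_i^T H(-λ_i) = c_i^T H_r(-λ_i), and c_i^T H'(-λ_i) b_i = c_i^T H_r'(-λ_i) b_i, for tangent directions b_i, c_i given by the right and left eigenvector residues of H_r. -/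
/-
Write `K = σE - A` with `σ = -λᵢ`. The reduced resolvent `(WᵀKV)⁻¹` lifts to
`P = V (WᵀKV)⁻¹ Wᵀ`, and `P K` is the oblique projection onto `range V` along `ker Wᵀ`; hence `P u = K⁻¹ u` as soon as `K⁻¹ u ∈ range V`, and dually
`u P = u K⁻¹` as soon as `K⁻ᵀ uᵀ ∈ range W`.  The right and left conditions follow by
multiplying with `C` and `B`, and the Hermite condition because
`cᵀ C K⁻¹ E K⁻¹ B b` only involves the two vectors `cᵀ C K⁻¹` and `K⁻¹ B b`.
-/

open Matrix

namespace Matrix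

variable {𝕜 ι κ : Type*} [Field 𝕜] [Fintype ι] [Fintype κ] [DecidableEq κ]

noncomputable def petrovGalerkinInv (K : Matrix ι ι 𝕜) (V W : Matrix ι κ 𝕜) : Matrix ι ι 𝕜 :=
  V * (Wᵀ * K * V)⁻¹ * Wᵀ

theorem petrovGalerkinInv_mulVec_mulVec_of_mulVec_eq {K : Matrix ι ι 𝕜} {V W : Matrix ι κ 𝕜}
    (hKr : IsUnit (Wᵀ * K * V)) {z : κ → 𝕜} {x : ι → 𝕜} (hz : V *ᵥ z = x) :
    petrovGalerkinInv K V W *ᵥ (K *ᵥ x) = x := by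
  have hdet := (isUnit_iff_isUnit_det _).mp hKr
  rw [petrovGalerkinInv, ← hz, mulVec_mulVec, mulVec_mulVec, Matrix.mul_assoc _ Wᵀ,
    Matrix.mul_assoc _ (Wᵀ * K), Matrix.mul_assoc V, nonsing_inv_mul _ hdet, Matrix.mul_one]

theorem vecMul_vecMul_petrovGalerkinInv_of_mulVec_eq {K : Matrix ι ι 𝕜} {V W : Matrix ι κ 𝕜}
    (hKr : IsUnit (Wᵀ * K * V)) {y : κ → 𝕜} {w : ι → 𝕜} (hy : W *ᵥ y = w) :
    (w ᵥ* K) ᵥ* petrovGalerkinInv K V W = w := by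
  have hdet := (isUnit_iff_isUnit_det _).mp hKr
  rw [petrovGalerkinInv, ← hy, ← vecMul_transpose, vecMul_vecMul, vecMul_vecMul,
    ← Matrix.mul_assoc Wᵀ K, ← Matrix.mul_assoc, ← Matrix.mul_assoc, mul_nonsing_inv _ hdet,
    Matrix.one_mul]

variable [DecidableEq ι]

theorem petrovGalerkinInv_mulVec_eq_inv_mulVec {K : Matrix ι ι 𝕜} {V W : Matrix ι κ 𝕜}
    (hK : IsUnit K) (hKr : IsUnit (Wᵀ * K * V)) {z : κ → 𝕜} {u : ι → 𝕜}
    (hz : V *ᵥ z = K⁻¹ *ᵥ u) :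
    petrovGalerkinInv K V W *ᵥ u = K⁻¹ *ᵥ u := by
  have hdet := (isUnit_iff_isUnit_det _).mp hK
  conv_lhs => rw [← one_mulVec u, ← mul_nonsing_inv _ hdet, ← mulVec_mulVec]
  exact petrovGalerkinInv_mulVec_mulVec_of_mulVec_eq hKr hz

theorem vecMul_petrovGalerkinInv_eq_vecMul_inv {K : Matrix ι ι 𝕜} {V W : Matrix ι κ 𝕜}
    (hK : IsUnit K) (hKr : IsUnit (Wᵀ * K * V)) {y : κ → 𝕜} {u : ι → 𝕜}
    (hy : W *ᵥ y = u ᵥ* K⁻¹) :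
    u ᵥ* petrovGalerkinInv K V W = u ᵥ* K⁻¹ := by
  have hdet := (isUnit_iff_isUnit_det _).mp hK
  conv_lhs => rw [← vecMul_one u, ← nonsing_inv_mul _ hdet, ← vecMul_vecMul]
  exact vecMul_vecMul_petrovGalerkinInv_of_mulVec_eq hKr hy

theorem vecMul_mul_mul_mul_mul_dotProduct {R ι μ ν : Type*} [CommSemiring R]
    [Fintype ι] [Fintype μ] [Fintype ν] (c : ν → R) (b : μ → R) (C : Matrix ν ι R)
    (M E N : Matrix ι ι R) (B : Matrix ι μ R) :
    c ᵥ* (C * M * E * N * B) ⬝ᵥ b = ((c ᵥ* C) ᵥ* M) ⬝ᵥ (E *ᵥ (N *ᵥ (B *ᵥ b))) := by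
  simp only [mulVec_mulVec, dotProduct_mulVec, vecMul_vecMul, Matrix.mul_assoc]

theorem smul_mul_mul_sub_mul_mul_s5 {R ι κ : Type*} [CommRing R] [Fintype ι]
    (s : R) (X : Matrix κ ι R) (E A : Matrix ι ι R) (V : Matrix ι κ R) :
    s • (X * E * V) - X * A * V = X * (s • E - A) * V := by
  rw [Matrix.mul_sub, Matrix.sub_mul, Matrix.mul_smul, Matrix.smul_mul]

end Matrix

theorem tangential_hermite_interpolation {𝕜 ι κ μ ν : Type*} [Field 𝕜] [Fintype ι]
    [DecidableEq ι] [Fintype κ] [DecidableEq κ] [Fintype μ] [Fintype ν]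
    {K E : Matrix ι ι 𝕜} {B : Matrix ι μ 𝕜} {C : Matrix ν ι 𝕜} {V W : Matrix ι κ 𝕜}
    {b : μ → 𝕜} {c : ν → 𝕜} (hK : IsUnit K) (hKr : IsUnit (Wᵀ * K * V))
    (hV : ∃ z, V *ᵥ z = K⁻¹ *ᵥ (B *ᵥ b)) (hW : ∃ y, W *ᵥ y = K⁻¹ᵀ *ᵥ (Cᵀ *ᵥ c)) :
    (C * K⁻¹ * B) *ᵥ b = ((C * V) * (Wᵀ * K * V)⁻¹ * (Wᵀ * B)) *ᵥ b ∧
      c ᵥ* (C * K⁻¹ * B) = c ᵥ* ((C * V) * (Wᵀ * K * V)⁻¹ * (Wᵀ * B)) ∧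
      c ᵥ* (-(C * K⁻¹ * E * K⁻¹ * B)) ⬝ᵥ b
        = c ᵥ* (-((C * V) * (Wᵀ * K * V)⁻¹ * (Wᵀ * E * V) * (Wᵀ * K * V)⁻¹ * (Wᵀ * B))) ⬝ᵥ b := by
  obtain ⟨z, hz⟩ := hV
  obtain ⟨y, hy⟩ := hW
  rw [mulVec_transpose, mulVec_transpose] at hy
  have hright := petrovGalerkinInv_mulVec_eq_inv_mulVec (W := W) hK hKr hz
  have hleft := vecMul_petrovGalerkinInv_eq_vecMul_inv (V := V) hK hKr hy
  set P := petrovGalerkinInv K V W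
  have hHr : (C * V) * (Wᵀ * K * V)⁻¹ * (Wᵀ * B) = C * P * B := by
    simp only [P, petrovGalerkinInv, Matrix.mul_assoc]
  have hHr' : (C * V) * (Wᵀ * K * V)⁻¹ * (Wᵀ * E * V) * (Wᵀ * K * V)⁻¹ * (Wᵀ * B)
      = C * P * E * P * B := by
    simp only [P, petrovGalerkinInv, Matrix.mul_assoc]
  rw [hHr, hHr', vecMul_neg, vecMul_neg, neg_dotProduct, neg_dotProduct,
    vecMul_mul_mul_mul_mul_dotProduct, vecMul_mul_mul_mul_mul_dotProduct]
  refine ⟨?_, ?_, ?_⟩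
  · simp only [← mulVec_mulVec, hright]
  · simp only [← vecMul_vecMul, hleft]
  · rw [hright, hleft]

theorem stmt5_general {n m p r : ℕ}
    (E A : Matrix (Fin n) (Fin n) ℂ) (B : Matrix (Fin n) (Fin m) ℂ)
    (C : Matrix (Fin p) (Fin n) ℂ)
    (V W : Matrix (Fin n) (Fin r) ℂ)
    (lam : Fin r → ℂ) (b : Fin r → Fin m → ℂ) (c : Fin r → Fin p → ℂ)
    (hσ : ∀ i, IsUnit ((-lam i) • E - A))
    (hσr : ∀ i, IsUnit ((-lam i) • (Wᵀ * E * V) - Wᵀ * A * V))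
    (hspanV : ∀ i, ∃ z : Fin r → ℂ,
      V *ᵥ z = ((-lam i) • E - A)⁻¹ *ᵥ (B *ᵥ b i))
    (hspanW : ∀ i, ∃ z : Fin r → ℂ,
      W *ᵥ z = (((-lam i) • E - A)⁻¹)ᵀ *ᵥ (Cᵀ *ᵥ c i)) :
    ∀ i,
      ((C * ((-lam i) • E - A)⁻¹ * B) *ᵥ b i
        = ((C * V) * ((-lam i) • (Wᵀ * E * V) - Wᵀ * A * V)⁻¹ * (Wᵀ * B)) *ᵥ b i)
      ∧
      (c i ᵥ* (C * ((-lam i) • E - A)⁻¹ * B)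
        = c i ᵥ* ((C * V) * ((-lam i) • (Wᵀ * E * V) - Wᵀ * A * V)⁻¹ * (Wᵀ * B)))
      ∧
      (c i ᵥ* (-(C * ((-lam i) • E - A)⁻¹ * E * ((-lam i) • E - A)⁻¹ * B)) ⬝ᵥ b i
        = c i ᵥ* (-((C * V) * ((-lam i) • (Wᵀ * E * V) - Wᵀ * A * V)⁻¹ *
            (Wᵀ * E * V) * ((-lam i) • (Wᵀ * E * V) - Wᵀ * A * V)⁻¹ * (Wᵀ * B))) ⬝ᵥ b i) := by
  intro i
  have hKr := hσr i
  rw [smul_mul_mul_sub_mul_mul_s5] at hKr ⊢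
  exact tangential_hermite_interpolation (hσ i) hKr (hspanV i) (hspanW i)

/-- IRKA fixed-point property: upon convergence of tangential IRKA the interpolation
points are the mirror images `-λ i` of the eigenvalues of the reduced pencil
`A_r E_r⁻¹`, and the projection bases contain the corresponding tangential rational
Krylov directions.  Then the reduced transfer function
`H_r(s) = C_r(sE_r - A_r)⁻¹B_r` Hermite-tangentially interpolates
`H(s) = C(sE - A)⁻¹B` at the reflected reduced poles along the tangent directions
`b i`, `c i`  (with `H'(s) = -C(sE-A)⁻¹E(sE-A)⁻¹B`). -/
theorem stmt5 {n m p r : ℕ}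
    (E A : Matrix (Fin n) (Fin n) ℂ) (B : Matrix (Fin n) (Fin m) ℂ)
    (C : Matrix (Fin p) (Fin n) ℂ)
    (V W : Matrix (Fin n) (Fin r) ℂ)
    (lam : Fin r → ℂ) (b : Fin r → Fin m → ℂ) (c : Fin r → Fin p → ℂ)
    (hEr : IsUnit (Wᵀ * E * V))
    (hconv : ∀ i, lam i ∈ spectrum ℂ ((Wᵀ * A * V) * (Wᵀ * E * V)⁻¹))
    (hσ : ∀ i, IsUnit ((-lam i) • E - A))
    (hσr : ∀ i, IsUnit ((-lam i) • (Wᵀ * E * V) - Wᵀ * A * V))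
    (hspanV : ∀ i, ∃ z : Fin r → ℂ,
      V *ᵥ z = ((-lam i) • E - A)⁻¹ *ᵥ (B *ᵥ b i))
    (hspanW : ∀ i, ∃ z : Fin r → ℂ,
      W *ᵥ z = (((-lam i) • E - A)⁻¹)ᵀ *ᵥ (Cᵀ *ᵥ c i)) :
    ∀ i,
      ((C * ((-lam i) • E - A)⁻¹ * B) *ᵥ b i
        = ((C * V) * ((-lam i) • (Wᵀ * E * V) - Wᵀ * A * V)⁻¹ * (Wᵀ * B)) *ᵥ b i)
      ∧
      (c i ᵥ* (C * ((-lam i) • E - A)⁻¹ * B)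
        = c i ᵥ* ((C * V) * ((-lam i) • (Wᵀ * E * V) - Wᵀ * A * V)⁻¹ * (Wᵀ * B)))
      ∧
      (c i ᵥ* (-(C * ((-lam i) • E - A)⁻¹ * E * ((-lam i) • E - A)⁻¹ * B)) ⬝ᵥ b i
        = c i ᵥ* (-((C * V) * ((-lam i) • (Wᵀ * E * V) - Wᵀ * A * V)⁻¹ *
            (Wᵀ * E * V) * ((-lam i) • (Wᵀ * E * V) - Wᵀ * A * V)⁻¹ * (Wᵀ * B))) ⬝ᵥ b i) :=
  stmt5_general E A B C V W lam b c hσ hσr hspanV hspanW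
end
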